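/- arXiv:1811.11305 — 4 statements merged into one kernel-verified Lean document; each statement's English description precedes it below -/
import Mathlib

section
/- Let a and b be nonzero integers, n a positive integer such that aj + b ≠ 0 for every integer j with 1 ≤ j ≤ n, and k a positive integer. Then ∑_{j=1}^{n} 1/(aj+b)^{2k} = -1/(2b^{2k}) + 1/(2(an+b)^{2k}) - (-1)^{k}(2π)^{2k} ∫_{0}^{1} [ ∑_{j=0}^{k} B_{2j}(2-2^{2j})(1-u)^{2k-2j}/((2j)!(2k-2j)!) ]·cos(π(an+2b)u)·sin(πanu)·cot(πau) du. -/
/-!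
Write `J_p(c) = ∫₀¹ (1-u)^p/p! cos(cu) du`. One antiderivative (integration by parts twice) gives
`c² J_{p+2} + J_p = 1/(p+1)!`, and `J_0 = 0` when `sin c = 0`. The kernel's coefficients are the
Taylor coefficients of `x / sinh x`, so convolving them with `1/(2q+1)!` (those of `sinh x / x`)
gives `[q = 0]`; hence the kernel integral `T_k` satisfies `c² T_{k+1} + T_k = [k = 0]`, i.e.
`T_k = (-1)^(k+1) / c^(2k)` for `k ≥ 1` and `c ∈ 2πℤ ∖ {0}`. On the other side,
`cos(π(an+2b)u) sin(πanu) cot(πau)` telescopes to `∑_{j<n} (cos(c_{j+1}u) + cos(c_j u))/2` with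
`c_j = 2π(aj+b)`, so the integral is a trapezoid sum of `-1/(aj+b)^(2k)`.
-/

open Finset Real
open scoped Nat

theorem Polynomial.bernoulli_eval_one_half_of_odd {n : ℕ} (hn : Odd n) :
    (Polynomial.bernoulli n).eval (1 / 2 : ℚ) = 0 := by
  have h := Polynomial.bernoulli_eval_one_sub n (1 / 2)
  rw [hn.neg_one_pow] at h
  norm_num at h
  linarith

theorem sum_bernoulli_mul_choose_mul_two_pow (n : ℕ) :
    ∑ i ∈ range (n + 1), bernoulli i * n.choose i * 2 ^ i =
      2 ^ n * (Polynomial.bernoulli n).eval (1 / 2 : ℚ) := by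
  rw [Polynomial.bernoulli, Polynomial.eval_finsetSum, mul_sum]
  refine sum_congr rfl fun i hi => ?_
  have hcancel : (2 : ℚ) ^ (n - i) * (1 / 2) ^ (n - i) = 1 := by rw [← mul_pow]; norm_num
  rw [Polynomial.eval_monomial,
    show (2 : ℚ) ^ n = 2 ^ i * 2 ^ (n - i) by rw [← pow_add, Nat.add_sub_of_le (by grind)]]
  linear_combination (-(bernoulli i * n.choose i * 2 ^ i)) * hcancel

theorem sum_bernoulli_mul_two_sub_two_pow_mul_choose_of_odd {n : ℕ} (hn : Odd n) :
    ∑ j ∈ range (n + 1), bernoulli j * (2 - 2 ^ j) * n.choose j = if n = 1 then 1 else 0 := by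
  have hsplit : ∀ j, bernoulli j * (2 - 2 ^ j) * n.choose j =
      2 * (n.choose j * bernoulli j) - bernoulli j * n.choose j * 2 ^ j := fun j => by ring
  simp only [hsplit, sum_sub_distrib, ← mul_sum]
  rw [sum_bernoulli_mul_choose_mul_two_pow, Polynomial.bernoulli_eval_one_half_of_odd hn,
    sum_range_succ, sum_bernoulli, Nat.choose_self]
  split_ifs with h1
  · subst h1; norm_num [bernoulli_one]
  · rw [bernoulli_eq_zero_of_odd hn (by grind)]; simp

theorem Finset.sum_range_two_mul_of_odd_eq_zero {M : Type*} [AddCommMonoid M] (g : ℕ → M)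
    (hg : ∀ j, Odd j → g j = 0) (r : ℕ) :
    ∑ j ∈ range (2 * r), g j = ∑ i ∈ range r, g (2 * i) := by
  induction r with
  | zero => simp
  | succ r ih =>
    rw [show 2 * (r + 1) = 2 * r + 1 + 1 by ring, sum_range_succ, sum_range_succ, sum_range_succ,
      ih, hg _ (odd_two_mul_add_one r), add_zero]

/-- The Taylor coefficients of `x / sinh x = ∑ j, sinhBernoulliCoeff j * x ^ (2 * j)`. -/
noncomputable def sinhBernoulliCoeff (j : ℕ) : ℝ :=
  bernoulli (2 * j) * (2 - 2 ^ (2 * j)) / (2 * j)!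

theorem sum_sinhBernoulliCoeff_div_factorial (r : ℕ) :
    ∑ j ∈ range (r + 1), sinhBernoulliCoeff j / (2 * (r - j) + 1)! = if r = 0 then 1 else 0 := by
  set g : ℕ → ℚ := fun j => bernoulli j * (2 - 2 ^ j) * (2 * r + 1).choose j
  have hg : ∀ j, Odd j → g j = 0 := by
    intro j hj
    rcases eq_or_ne j 1 with rfl | h1
    · norm_num [g]
    · simp [g, bernoulli_eq_zero_of_odd hj (by grind)]
  have hsum : ∑ i ∈ range (r + 1), g (2 * i) = if r = 0 then 1 else 0 := by
    rw [← sum_range_two_mul_of_odd_eq_zero g hg,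
      show 2 * (r + 1) = 2 * r + 1 + 1 by ring,
      sum_bernoulli_mul_two_sub_two_pow_mul_choose_of_odd (odd_two_mul_add_one r)]
    simp
  have hterm : ∀ j ∈ range (r + 1),
      sinhBernoulliCoeff j / (2 * (r - j) + 1)! = (g (2 * j) : ℝ) / (2 * r + 1)! := by
    intro j hj
    have hj : 2 * j ≤ 2 * r + 1 := by grind
    simp only [sinhBernoulliCoeff, g, Rat.cast_mul, Rat.cast_sub, Rat.cast_pow, Rat.cast_ofNat,
      Rat.cast_natCast, Nat.cast_choose ℝ hj, show 2 * r + 1 - 2 * j = 2 * (r - j) + 1 by grind]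
    field_simp
  rw [sum_congr rfl hterm, ← sum_div, ← Rat.cast_sum, hsum]
  split_ifs <;> simp [*]

noncomputable def cosMoment (c : ℝ) (p : ℕ) : ℝ :=
  ∫ u in (0 : ℝ)..1, (1 - u) ^ p / p ! * cos (c * u)

theorem cosMoment_zero {c : ℝ} (hc : c ≠ 0) : cosMoment c 0 = sin c / c := by
  simp [cosMoment, intervalIntegral.integral_comp_mul_left (fun u => cos u) hc, div_eq_inv_mul]

theorem hasDerivAt_one_sub_pow_succ_div_factorial (p : ℕ) (u : ℝ) :
    HasDerivAt (fun u : ℝ => (1 - u) ^ (p + 1) / (p + 1)!) (-((1 - u) ^ p / p !)) u := by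
  have h := (((hasDerivAt_id u).const_sub 1).pow (p + 1)).div_const ((p + 1)! : ℝ)
  refine h.congr_deriv ?_
  rw [Nat.factorial_succ]
  push_cast
  field_simp
  simp

theorem sq_mul_cosMoment_add_two_add_cosMoment (c : ℝ) (p : ℕ) :
    c ^ 2 * cosMoment c (p + 2) + cosMoment c p = 1 / (p + 1)! := by
  set G : ℝ → ℝ := fun u =>
    c * ((1 - u) ^ (p + 2) / (p + 2)!) * sin (c * u) - (1 - u) ^ (p + 1) / (p + 1)! * cos (c * u)
  have hG : ∀ u, HasDerivAt G
      (c ^ 2 * ((1 - u) ^ (p + 2) / (p + 2)! * cos (c * u)) + (1 - u) ^ p / p ! * cos (c * u))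
      u := by
    intro u
    have hcu : HasDerivAt (fun u => c * u) c u := by simpa using (hasDerivAt_id u).const_mul c
    have h := (((hasDerivAt_one_sub_pow_succ_div_factorial (p + 1) u).const_mul c).mul
      hcu.sin).sub ((hasDerivAt_one_sub_pow_succ_div_factorial p u).mul hcu.cos)
    exact h.congr_deriv (by ring)
  unfold cosMoment
  rw [← intervalIntegral.integral_const_mul,
    ← intervalIntegral.integral_add ((by fun_prop : Continuous _).intervalIntegrable _ _)
      ((by fun_prop : Continuous _).intervalIntegrable _ _),
    intervalIntegral.integral_eq_sub_of_hasDerivAt (fun u _ => hG u)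
      ((by fun_prop : Continuous _).intervalIntegrable _ _)]
  simp [G]

/-- This is `2^(2k) B_{2k}(u/2) / (2k)!`, expanded around `u = 1`. -/
noncomputable def bernoulliKernel (k : ℕ) (u : ℝ) : ℝ :=
  ∑ j ∈ range (k + 1), (bernoulli (2 * j) : ℝ) * (2 - 2 ^ (2 * j)) * (1 - u) ^ (2 * k - 2 * j) /
    ((2 * j)! * (2 * k - 2 * j)!)

theorem continuous_bernoulliKernel (k : ℕ) : Continuous (bernoulliKernel k) := by
  unfold bernoulliKernel
  fun_prop

theorem integral_bernoulliKernel_mul_cos (c : ℝ) (k : ℕ) :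
    ∫ u in (0 : ℝ)..1, bernoulliKernel k u * cos (c * u) =
      ∑ j ∈ range (k + 1), sinhBernoulliCoeff j * cosMoment c (2 * (k - j)) := by
  simp only [bernoulliKernel, cosMoment, sum_mul]
  rw [intervalIntegral.integral_finsetSum fun j _ =>
    (by fun_prop : Continuous _).intervalIntegrable _ _]
  refine sum_congr rfl fun j _ => ?_
  rw [← intervalIntegral.integral_const_mul, show 2 * k - 2 * j = 2 * (k - j) by grind]
  congr 1 with u
  simp only [sinhBernoulliCoeff]
  field_simp

theorem sq_mul_integral_bernoulliKernel_succ_mul_cos_add {c : ℝ} (hc : c ≠ 0) (hs : sin c = 0)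
    (k : ℕ) :
    c ^ 2 * (∫ u in (0 : ℝ)..1, bernoulliKernel (k + 1) u * cos (c * u)) +
      ∫ u in (0 : ℝ)..1, bernoulliKernel k u * cos (c * u) = if k = 0 then 1 else 0 := by
  have hstep : ∀ j ∈ range (k + 1),
      c ^ 2 * (sinhBernoulliCoeff j * cosMoment c (2 * (k + 1 - j))) +
        sinhBernoulliCoeff j * cosMoment c (2 * (k - j)) =
        sinhBernoulliCoeff j / (2 * (k - j) + 1)! := by
    intro j hj
    rw [show 2 * (k + 1 - j) = 2 * (k - j) + 2 by grind, div_eq_mul_one_div,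
      ← sq_mul_cosMoment_add_two_add_cosMoment]
    ring
  rw [integral_bernoulliKernel_mul_cos, integral_bernoulliKernel_mul_cos, sum_range_succ,
    Nat.sub_self, mul_zero, cosMoment_zero hc, hs, zero_div, mul_zero, add_zero, mul_sum,
    ← sum_add_distrib, sum_congr rfl hstep, sum_sinhBernoulliCoeff_div_factorial]

theorem integral_bernoulliKernel_mul_cos_of_sin_eq_zero {c : ℝ} (hc : c ≠ 0) (hs : sin c = 0)
    {k : ℕ} (hk : 0 < k) :
    ∫ u in (0 : ℝ)..1, bernoulliKernel k u * cos (c * u) = (-1) ^ (k + 1) / c ^ (2 * k) := by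
  induction k, (hk : 1 ≤ k) using Nat.le_induction with
  | base =>
    have h := sq_mul_integral_bernoulliKernel_succ_mul_cos_add hc hs 0
    rw [integral_bernoulliKernel_mul_cos c 0, sum_range_one, Nat.sub_self, mul_zero,
      cosMoment_zero hc, hs, if_pos rfl] at h
    field_simp
    linear_combination h
  | succ k hk ih =>
    have h := sq_mul_integral_bernoulliKernel_succ_mul_cos_add hc hs k
    rw [ih, if_neg (by omega)] at h
    rw [eq_div_iff (by positivity)]
    field_simp at h
    linear_combination h

theorem sin_sub_sin_mul_cos_of_sub_eq {x y θ : ℝ} (h : x - y = 2 * θ) :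
    (sin x - sin y) * cos θ = (cos x + cos y) * sin θ := by
  have hmid : sin (x - θ) = sin (y + θ) := by congr 1; linarith
  rw [sin_sub, sin_add] at hmid
  linear_combination hmid

theorem sin_sub_sin_mul_cos_eq_sum (x θ : ℝ) (n : ℕ) :
    (sin (x + 2 * n * θ) - sin x) * cos θ =
      (∑ j ∈ range n, (cos (x + 2 * (j + 1 : ℕ) * θ) + cos (x + 2 * j * θ))) * sin θ := by
  induction n with
  | zero => simp
  | succ n ih =>
    rw [sum_range_succ, add_mul, ← ih, ← sin_sub_sin_mul_cos_of_sub_eq (by push_cast; ring)]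
    ring

theorem cos_mul_sin_mul_cot_eq_sum {θ : ℝ} (hθ : sin θ ≠ 0) (x : ℝ) (n : ℕ) :
    cos (x + n * θ) * sin (n * θ) * cot θ =
      ∑ j ∈ range n, (cos (x + 2 * (j + 1 : ℕ) * θ) + cos (x + 2 * j * θ)) / 2 := by
  have hprod : 2 * (cos (x + n * θ) * sin (n * θ)) = sin (x + 2 * n * θ) - sin x := by
    rw [sin_sub_sin]
    ring_nf
  rw [← sum_div, cot_eq_cos_div_sin, eq_div_iff two_ne_zero, ← mul_div_assoc, div_mul_eq_mul_div,
    mul_comm _ (2 : ℝ), ← mul_assoc, hprod, sin_sub_sin_mul_cos_eq_sum, mul_div_assoc,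
    div_self hθ, mul_one]

theorem countable_setOf_sin_mul_eq_zero {c : ℝ} (hc : c ≠ 0) :
    {u : ℝ | sin (c * u) = 0}.Countable := by
  refine (Set.countable_range fun m : ℤ => m * π / c).mono fun u hu => ?_
  obtain ⟨m, hm⟩ := sin_eq_zero_iff.mp hu
  exact ⟨m, by simp only; rw [hm]; field_simp⟩

theorem integral_mul_cos_mul_sin_mul_cot {K : ℝ → ℝ} (hK : Continuous K) {a : ℝ} (ha : a ≠ 0)
    (b : ℝ) (n : ℕ) :
    ∫ u in (0 : ℝ)..1, K u * cos (π * (a * n + 2 * b) * u) * sin (π * a * n * u) * cot (π * a * u) =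
      ∑ j ∈ range n, ((∫ u in (0 : ℝ)..1, K u * cos (2 * π * (a * (j + 1 : ℕ) + b) * u)) +
        ∫ u in (0 : ℝ)..1, K u * cos (2 * π * (a * j + b) * u)) / 2 := by
  have hae : ∀ᵐ u, u ∈ Set.uIoc (0 : ℝ) 1 →
      K u * cos (π * (a * n + 2 * b) * u) * sin (π * a * n * u) * cot (π * a * u) =
        ∑ j ∈ range n, (K u * cos (2 * π * (a * (j + 1 : ℕ) + b) * u) +
          K u * cos (2 * π * (a * j + b) * u)) / 2 := by
    filter_upwards [(countable_setOf_sin_mul_eq_zero (mul_ne_zero pi_ne_zero ha)).ae_notMem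
      MeasureTheory.volume] with u hu _
    have hsum : cos (π * (a * n + 2 * b) * u) * sin (π * a * n * u) * cot (π * a * u) =
        ∑ j ∈ range n,
          (cos (2 * π * (a * (j + 1 : ℕ) + b) * u) + cos (2 * π * (a * j + b) * u)) / 2 := by
      rw [show π * (a * n + 2 * b) * u = 2 * π * b * u + n * (π * a * u) by ring,
        show π * a * n * u = n * (π * a * u) by ring, cos_mul_sin_mul_cot_eq_sum hu]
      refine sum_congr rfl fun j _ => ?_
      ring_nf
    rw [show ∀ x y z w : ℝ, x * y * z * w = x * (y * z * w) from fun _ _ _ _ => by ring, hsum,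
      mul_sum]
    simp only [mul_div_assoc', mul_add]
  rw [intervalIntegral.integral_congr_ae hae,
    intervalIntegral.integral_finsetSum fun j _ =>
      (by fun_prop : Continuous _).intervalIntegrable _ _]
  refine sum_congr rfl fun j _ => ?_
  rw [intervalIntegral.integral_div, intervalIntegral.integral_add
    ((by fun_prop : Continuous _).intervalIntegrable _ _)
    ((by fun_prop : Continuous _).intervalIntegrable _ _)]

theorem neg_one_pow_mul_two_pi_pow_mul_integral_bernoulliKernel_mul_cos {m : ℤ} (hm : m ≠ 0)
    {k : ℕ} (hk : 0 < k) :
    (-1 : ℝ) ^ k * (2 * π) ^ (2 * k) *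
      ∫ u in (0 : ℝ)..1, bernoulliKernel k u * cos (2 * π * m * u) = -(1 / (m : ℝ) ^ (2 * k)) := by
  have hc : 2 * π * m ≠ 0 := mul_ne_zero (by positivity) (Int.cast_ne_zero.2 hm)
  have hs : sin (2 * π * m) = 0 := sin_eq_zero_iff.mpr ⟨2 * m, by push_cast; ring⟩
  have hsign : (-1 : ℝ) ^ k * (-1) ^ (k + 1) = -1 := by
    rw [← pow_add, show k + (k + 1) = 2 * k + 1 by ring, pow_succ, pow_mul]
    norm_num
  rw [integral_bernoulliKernel_mul_cos_of_sin_eq_zero hc hs hk, mul_pow (2 * π), ← mul_div_assoc,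
    mul_right_comm, hsign, neg_one_mul, neg_div, div_mul_cancel_left₀ (by positivity), one_div]

theorem Finset.sum_range_add_div_two {K : Type*} [Field K] [CharZero K] (S : ℕ → K) (n : ℕ) :
    ∑ j ∈ range n, (S (j + 1) + S j) / 2 = ∑ j ∈ Icc 1 n, S j + (S 0 - S n) / 2 := by
  induction n with
  | zero => simp
  | succ n ih =>
    rw [sum_range_succ, ih, sum_Icc_succ_top (by omega)]
    ring

theorem stmt_6_general (a b : ℤ) (ha : a ≠ 0) (hb : b ≠ 0) (n : ℕ)
    (h : ∀ j : ℤ, 1 ≤ j → j ≤ n → a * j + b ≠ 0) (k : ℕ) (hk : 0 < k) :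
    ∑ j ∈ Finset.Icc 1 n, (1 : ℝ) / (a * j + b) ^ (2 * k) =
      -(1 / (2 * (b : ℝ) ^ (2 * k))) + 1 / (2 * ((a : ℝ) * n + b) ^ (2 * k))
      - (-1 : ℝ) ^ k * (2 * π) ^ (2 * k) *
          ∫ u in (0:ℝ)..1,
            (∑ j ∈ Finset.range (k + 1),
                (bernoulli (2 * j) : ℝ) * (2 - 2 ^ (2 * j)) * (1 - u) ^ (2 * k - 2 * j) /
                  ((Nat.factorial (2 * j)) * (Nat.factorial (2 * k - 2 * j)))) *
              Real.cos (π * (a * n + 2 * b) * u) * Real.sin (π * a * n * u) *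
              Real.cot (π * a * u) := by
  have hne : ∀ j ≤ n, a * (j : ℤ) + b ≠ 0 := by
    intro j hj
    rcases j.eq_zero_or_pos with rfl | hj0
    · simpa using hb
    · exact h j (by exact_mod_cast hj0) (by exact_mod_cast hj)
  set S : ℕ → ℝ := fun j => 1 / (a * j + b) ^ (2 * k)
  have hterm : ∀ j ≤ n, (-1 : ℝ) ^ k * (2 * π) ^ (2 * k) *
      ∫ u in (0 : ℝ)..1, bernoulliKernel k u * cos (2 * π * (a * j + b) * u) = -S j := by
    intro j hj
    have hj := neg_one_pow_mul_two_pi_pow_mul_integral_bernoulliKernel_mul_cos (hne j hj) hk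
    push_cast at hj
    exact hj
  change _ = _ - _ * ∫ u in (0 : ℝ)..1, bernoulliKernel k u * _ * _ * _
  rw [integral_mul_cos_mul_sin_mul_cot (continuous_bernoulliKernel k) (Int.cast_ne_zero.2 ha),
    mul_sum, sum_congr (s₁ := range n) rfl (g := fun j => -((S (j + 1) + S j) / 2)) fun j hj => by
      rw [mul_div_assoc', mul_add, hterm j (by grind), hterm (j + 1) (by grind), ← neg_add,
        neg_div],
    sum_neg_distrib, sum_range_add_div_two]
  simp only [S, one_div, mul_inv_rev, Nat.cast_zero, mul_zero, zero_add]
  ring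

theorem stmt_6 (a b : ℤ) (ha : a ≠ 0) (hb : b ≠ 0) (n : ℕ) (hn : 0 < n)
    (h : ∀ j : ℤ, 1 ≤ j → j ≤ n → a * j + b ≠ 0) (k : ℕ) (hk : 0 < k) :
    ∑ j ∈ Finset.Icc 1 n, (1 : ℝ) / (a * j + b) ^ (2 * k) =
      -(1 / (2 * (b : ℝ) ^ (2 * k))) + 1 / (2 * ((a : ℝ) * n + b) ^ (2 * k))
      - (-1 : ℝ) ^ k * (2 * π) ^ (2 * k) *
          ∫ u in (0:ℝ)..1,
            (∑ j ∈ Finset.range (k + 1),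
                (bernoulli (2 * j) : ℝ) * (2 - 2 ^ (2 * j)) * (1 - u) ^ (2 * k - 2 * j) /
                  ((Nat.factorial (2 * j)) * (Nat.factorial (2 * k - 2 * j)))) *
              Real.cos (π * (a * n + 2 * b) * u) * Real.sin (π * a * n * u) *
              Real.cot (π * a * u) :=
  stmt_6_general a b ha hb n h k hk
end

section
/- For every real number u and every real number x with 0 < |x| < π, the series ∑_{k=0}^{∞} (-1)^{k} [ ∑_{j=0}^{k} B_{2j}(2-2^{2j})(1-u)^{2k-2j}/((2j)!(2k-2j)!) ] x^{2k} converges and its sum equals x·cos(x(1-u))/sin(x). Equivalently, the 2k-th Taylor coefficient at 0 of f(x) = x·cos(x(1-u))/sin(x) is (-1)^{k} ∑_{j=0}^{k} B_{2j}(2-2^{2j})(1-u)^{2k-2j}/((2j)!(2k-2j)!). -/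
/-!
Since `x / sinh x = 2x / (eˣ - 1) - 2x / (e²ˣ - 1)`, the Taylor coefficient of `x²ʲ` in
`x / sinh x` is `cⱼ = (2 - 2²ʲ) B₂ⱼ / (2j)!`; as formal power series this is the identity
`(x / sinh x) · sinh x = x`. Read with alternating signs, the same coefficient identity says that
`S(x) = ∑ (-1)ʲ cⱼ x²ʲ` satisfies `S(x) · sin x = x` as a Cauchy product of numerical series.
The bound `|B₂ⱼ| / (2j)! = 2 ζ(2j) / (2π)²ʲ ≤ 4 / (2π)²ʲ` makes `S` converge absolutely for
`|x| < π`, so `S(x) = x / sin x`, and the series of the theorem is the Cauchy product of `S(x)`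
with the cosine series of `x (1 - u)`.
-/

open Nat Finset

namespace PowerSeries

variable (A : Type*) [CommRing A] [Algebra ℚ A]

noncomputable def sinhSeries : A⟦X⟧ :=
  mk fun n => if Odd n then algebraMap ℚ A (1 / n !) else 0

variable {A}

theorem two_mul_sinhSeries : 2 * sinhSeries A = exp A - evalNegHom (exp A) := by
  ext n
  rw [two_mul, map_add]
  rcases Nat.even_or_odd n with hn | hn
  · simp [sinhSeries, evalNegHom, coeff_exp, hn.neg_one_pow, Nat.not_odd_iff_even.2 hn]
  · simp [sinhSeries, evalNegHom, coeff_exp, hn.neg_one_pow, hn]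

theorem two_mul_bernoulliPowerSeries_sub_rescale_mul_sinhSeries :
    (2 * bernoulliPowerSeries A - rescale 2 (bernoulliPowerSeries A)) * sinhSeries A = X := by
  set B := bernoulliPowerSeries A
  set E := exp A
  have hB : B * (E - 1) = X := bernoulliPowerSeries_mul_exp_sub_one A
  have hB2 : rescale 2 B * (E ^ 2 - 1) = 2 * X := by
    have h := congrArg (rescale (2 : A)) hB
    rwa [map_mul, map_sub, map_one, rescale_X, ← Nat.cast_ofNat, ← exp_pow_eq_rescale_exp,
      Nat.cast_ofNat, map_ofNat] at h
  have hS : 2 * sinhSeries A * E = E ^ 2 - 1 := by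
    rw [two_mul_sinhSeries]
    linear_combination -(exp_mul_exp_neg_eq_one (A := A))
  have hunit : IsUnit (2 * E) := by
    refine IsUnit.mul ?_ (isUnit_exp A)
    simpa only [map_ofNat] using (isUnit_of_invertible (2 : ℚ)).map (algebraMap ℚ A⟦X⟧)
  refine hunit.mul_left_cancel ?_
  linear_combination (2 * B - rescale 2 B) * hS + 2 * (E + 1) * hB - hB2

theorem coeff_two_mul_bernoulliPowerSeries_sub_rescale (p : ℕ) :
    coeff p (2 * bernoulliPowerSeries ℚ - rescale 2 (bernoulliPowerSeries ℚ)) =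
      (2 - 2 ^ p) * bernoulli p / p ! := by
  simp only [two_mul, map_sub, map_add, coeff_rescale, bernoulliPowerSeries, coeff_mk,
    Algebra.algebraMap_self, RingHom.id_apply]
  ring

end PowerSeries

theorem two_sub_two_pow_mul_bernoulli_of_odd {p : ℕ} (hp : Odd p) :
    (2 - 2 ^ p) * bernoulli p = 0 := by
  obtain rfl | hp1 := eq_or_ne p 1
  · norm_num
  · rw [bernoulli_eq_zero_of_odd hp (by grind), mul_zero]

theorem Finset.sum_range_two_mul_add_two_of_odd_eq_zero {M : Type*} [AddCommMonoid M]
    {f : ℕ → M} (hf : ∀ p, Odd p → f p = 0) (k : ℕ) :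
    ∑ p ∈ range (2 * k + 2), f p = ∑ j ∈ range (k + 1), f (2 * j) := by
  induction k with
  | zero => simp [sum_range_succ, hf 1 odd_one]
  | succ k ih =>
    rw [show 2 * (k + 1) + 2 = 2 * k + 2 + 1 + 1 by ring, sum_range_succ, sum_range_succ, ih,
      hf (2 * k + 2 + 1) ⟨k + 1, by ring⟩, add_zero, sum_range_succ _ (k + 1), mul_add_one]

open PowerSeries in
theorem sum_bernoulli_two_mul_mul_two_sub_div (N : ℕ) :
    ∑ j ∈ range (N + 1), bernoulli (2 * j) * (2 - 2 ^ (2 * j)) / ((2 * j)! * (2 * (N - j) + 1)!) =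
      if N = 0 then 1 else 0 := by
  have h := congrArg (coeff (2 * N + 1))
    (two_mul_bernoulliPowerSeries_sub_rescale_mul_sinhSeries (A := ℚ))
  rw [coeff_mul, Nat.sum_antidiagonal_eq_sum_range_succ_mk, coeff_X,
    sum_range_two_mul_add_two_of_odd_eq_zero] at h
  · convert h using 1
    · refine sum_congr rfl fun j hj => ?_
      have hjN : 2 * N + 1 - 2 * j = 2 * (N - j) + 1 := by grind
      simp only [coeff_two_mul_bernoulliPowerSeries_sub_rescale, sinhSeries, coeff_mk, hjN,
        odd_two_mul_add_one, if_true, Algebra.algebraMap_self, RingHom.id_apply]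
      ring
    · simp
  · intro p hp
    rw [coeff_two_mul_bernoulliPowerSeries_sub_rescale, two_sub_two_pow_mul_bernoulli_of_odd hp,
      zero_div, zero_mul]

open Real

theorem abs_bernoulli_two_mul_div_factorial_le {j : ℕ} (hj : j ≠ 0) :
    |(bernoulli (2 * j) : ℝ)| / (2 * j)! ≤ 4 / (2 * π) ^ (2 * j) := by
  have hzeta := hasSum_zeta_nat hj
  have hzeta_nonneg := hzeta.nonneg fun n => by positivity
  have hzeta_le : _ ≤ π ^ 2 / 6 := hasSum_le (fun n => ?_) hzeta hasSum_zeta_two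
  · have hπ : π ^ 2 / 6 * (2 * j)! ≤ 2 * (2 * j)! := by
      gcongr
      nlinarith [pi_lt_d2, pi_pos]
    rw [← abs_of_nonneg hzeta_nonneg] at hzeta_le
    simp only [abs_div, abs_mul, abs_pow, abs_neg, abs_one, one_pow, one_mul, abs_two,
      abs_of_pos pi_pos, Nat.abs_cast] at hzeta_le
    rw [div_le_iff₀ (by positivity)] at hzeta_le
    rw [mul_pow, ← mul_pow_sub_one (by omega), div_le_div_iff₀ (by positivity) (by positivity)]
    linarith
  · rcases n.eq_zero_or_pos with rfl | hn
    · simp [hj]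
    · exact one_div_le_one_div_of_le (by positivity) (pow_le_pow_right₀ (mod_cast hn) (by omega))

noncomputable def xDivSinhCoeff (j : ℕ) : ℝ :=
  bernoulli (2 * j) * (2 - 2 ^ (2 * j)) / (2 * j)!

theorem sum_xDivSinhCoeff_div_factorial (N : ℕ) :
    ∑ j ∈ range (N + 1), xDivSinhCoeff j / (2 * (N - j) + 1)! = if N = 0 then 1 else 0 := by
  have h := congrArg (Rat.cast : ℚ → ℝ) (sum_bernoulli_two_mul_mul_two_sub_div N)
  rw [Rat.cast_sum, apply_ite Rat.cast, Rat.cast_one, Rat.cast_zero] at h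
  rw [← h]
  refine sum_congr rfl fun j _ => ?_
  push_cast [xDivSinhCoeff, div_div]
  rfl

theorem abs_xDivSinhCoeff_le (j : ℕ) : |xDivSinhCoeff j| ≤ 4 / π ^ (2 * j) := by
  rcases eq_or_ne j 0 with rfl | hj
  · norm_num [xDivSinhCoeff]
  have h4 : (4 : ℝ) ≤ 2 ^ (2 * j) :=
    calc (4 : ℝ) = 2 ^ 2 := by norm_num
      _ ≤ 2 ^ (2 * j) := pow_le_pow_right₀ one_le_two (by omega)
  calc |xDivSinhCoeff j|
      = |(bernoulli (2 * j) : ℝ)| / (2 * j)! * (2 ^ (2 * j) - 2) := by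
        rw [xDivSinhCoeff, mul_div_right_comm, abs_mul, abs_div, Nat.abs_cast, abs_sub_comm,
          abs_of_nonneg (show (0 : ℝ) ≤ 2 ^ (2 * j) - 2 by linarith)]
    _ ≤ 4 / (2 * π) ^ (2 * j) * 2 ^ (2 * j) :=
        mul_le_mul (abs_bernoulli_two_mul_div_factorial_le hj) (by linarith) (by linarith)
          (by positivity)
    _ = 4 / π ^ (2 * j) := by
        rw [mul_pow]
        field_simp

theorem summable_norm_xDivSinhCoeff_mul_pow {x : ℝ} (hx : |x| < π) :
    Summable fun j => ‖(-1) ^ j * xDivSinhCoeff j * x ^ (2 * j)‖ := by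
  have hr : (|x| / π) ^ 2 < 1 :=
    pow_lt_one₀ (by positivity) ((div_lt_one pi_pos).2 hx) two_ne_zero
  refine .of_nonneg_of_le (fun j => norm_nonneg _) (fun j => ?_)
    ((summable_geometric_of_lt_one (by positivity) hr).mul_left 4)
  calc ‖(-1) ^ j * xDivSinhCoeff j * x ^ (2 * j)‖
      = |xDivSinhCoeff j| * |x| ^ (2 * j) := by simp
    _ ≤ 4 / π ^ (2 * j) * |x| ^ (2 * j) := by gcongr; exact abs_xDivSinhCoeff_le j
    _ = 4 * ((|x| / π) ^ 2) ^ j := by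
        rw [← pow_mul, div_pow]
        ring

theorem summable_norm_cos_series (r : ℝ) :
    Summable fun n => ‖(-1) ^ n * r ^ (2 * n) / (2 * n)!‖ :=
  (hasSum_cosh |r|).summable.congr fun n => by simp

theorem summable_norm_sin_series (r : ℝ) :
    Summable fun n => ‖(-1) ^ n * r ^ (2 * n + 1) / (2 * n + 1)!‖ :=
  (hasSum_sinh |r|).summable.congr fun n => by simp

theorem hasSum_xDivSinhCoeff {x : ℝ} (hx0 : x ≠ 0) (hx : |x| < π) :
    HasSum (fun j => (-1) ^ j * xDivSinhCoeff j * x ^ (2 * j)) (x / sin x) := by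
  have hcauchy := hasSum_sum_range_mul_of_summable_norm (summable_norm_xDivSinhCoeff_mul_pow hx)
    (summable_norm_sin_series x)
  rw [(hasSum_sin x).tsum_eq] at hcauchy
  have hterm (n : ℕ) : ∑ k ∈ range (n + 1), (-1) ^ k * xDivSinhCoeff k * x ^ (2 * k) *
      ((-1) ^ (n - k) * x ^ (2 * (n - k) + 1) / (2 * (n - k) + 1)!) = if n = 0 then x else 0 := by
    calc _ = (-1) ^ n * x ^ (2 * n + 1) *
          ∑ k ∈ range (n + 1), xDivSinhCoeff k / (2 * (n - k) + 1)! := by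
          rw [mul_sum]
          refine sum_congr rfl fun k hk => ?_
          obtain ⟨i, rfl⟩ := Nat.exists_eq_add_of_le (Nat.lt_succ_iff.1 (mem_range.1 hk))
          simp only [Nat.add_sub_cancel_left, pow_add, mul_add, pow_mul]
          ring
      _ = _ := by rw [sum_xDivSinhCoeff_div_factorial]; split_ifs with h <;> simp [h]
  simp only [hterm] at hcauchy
  have hsin : sin x ≠ 0 := by
    rw [Ne, sin_eq_zero_iff_of_lt_of_lt (neg_lt_of_abs_lt hx) (lt_of_abs_lt hx)]
    exact hx0
  have hsum : ∑' j, (-1) ^ j * xDivSinhCoeff j * x ^ (2 * j) = x / sin x := by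
    rw [eq_div_iff hsin]
    exact ((hasSum_ite_eq 0 x).unique hcauchy).symm
  exact hsum ▸ (summable_norm_xDivSinhCoeff_mul_pow hx).of_norm.hasSum

theorem stmt_11 (u x : ℝ) (h1 : 0 < |x|) (h2 : |x| < π) :
    HasSum
      (fun k : ℕ => (-1 : ℝ) ^ k *
        (∑ j ∈ Finset.range (k + 1),
          (bernoulli (2 * j) : ℝ) * (2 - 2 ^ (2 * j)) * (1 - u) ^ (2 * k - 2 * j) /
            ((Nat.factorial (2 * j)) * (Nat.factorial (2 * k - 2 * j)))) *
        x ^ (2 * k))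
      (x * Real.cos (x * (1 - u)) / Real.sin x) := by
  have hcauchy := hasSum_sum_range_mul_of_summable_norm (summable_norm_xDivSinhCoeff_mul_pow h2)
    (summable_norm_cos_series (x * (1 - u)))
  rw [(hasSum_xDivSinhCoeff (abs_pos.mp h1) h2).tsum_eq, (hasSum_cos _).tsum_eq,
    div_mul_eq_mul_div] at hcauchy
  refine hcauchy.congr_fun fun k => ?_
  rw [mul_sum, sum_mul]
  refine sum_congr rfl fun j hj => ?_
  obtain ⟨i, rfl⟩ := Nat.exists_eq_add_of_le (Nat.lt_succ_iff.1 (mem_range.1 hj))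
  simp only [xDivSinhCoeff, mul_add, Nat.add_sub_cancel_left, pow_add, mul_pow]
  field_simp
end

section
/- Let a and b be nonzero integers, n a positive integer such that aj + b ≠ 0 for every integer j with 1 ≤ j ≤ n, m a nonzero complex number, and k a positive integer. Writing HP_{r}(n) = ∑_{j=1}^{n} 1/(aj+b)^{r}, one has ∑_{j=1}^{n} (1/(aj+b)^{2k})·cos(2π(aj+b)/m) = -(1/(2b^{2k}))( cos(2πb/m) - ∑_{j=0}^{k} (-1)^{j}(2πb/m)^{2j}/(2j)! ) + (1/(2(an+b)^{2k}))( cos(2π(an+b)/m) - ∑_{j=0}^{k} (-1)^{j}(2π(an+b)/m)^{2j}/(2j)! ) + ∑_{j=1}^{k} ((-1)^{k-j}(2π/m)^{2k-2j}/(2k-2j)!)·HP_{2j}(n) + ((-1)^{k}(2π/m)^{2k}/(2(2k-1)!)) ∫_{0}^{1} (1-u)^{2k-1}·( sin(2π(an+b)u/m) - sin(2πbu/m) )·cot(πau/m) du. -/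
/-!
Put `z_j = a j + b` and `c = 2π/m`. Taylor's formula with integral remainder,
`cos x - ∑_{i<k} (-1)^i x^{2i}/(2i)! = (-1)^k x^{2k}/(2k-1)! ∫₀¹ (1-u)^{2k-1} cos(xu) du`,
taken at `x = c z_j` and divided by `z_j^{2k}`, splits `cos(c z_j)/z_j^{2k}` into the sums
`HP_{2i}(n)` and the integrals `∫₀¹ (1-u)^{2k-1} cos(c z_j u) du`. Pairing consecutive terms
(`2 ∑_{j=1}^n f_j = ∑_{j<n} (f_{j+1} + f_j) - f_0 + f_n`) produces the two boundary terms, while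
`z_{j+1} = z_j + a` and `(sin(Y + 2θ) - sin Y) cot θ = cos(Y + 2θ) + cos Y` telescope
`∑_{j<n} (cos(c z_{j+1} u) + cos(c z_j u))` into `(sin(c z_n u) - sin(c b u)) cot(π a u/m)`.
-/

open Real Complex
open intervalIntegral Finset

lemma hasDerivAt_one_sub_ofReal_pow (N : ℕ) (u : ℝ) :
    HasDerivAt (fun t : ℝ => (1 - (t : ℂ)) ^ (N + 1)) (-((N + 1) * (1 - (u : ℂ)) ^ N)) u := by
  have h := ((hasDerivAt_id (u : ℂ)).const_sub 1).pow (N + 1)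
  simpa using h.comp_ofReal

lemma hasDerivAt_sin_mul_ofReal (x : ℂ) (u : ℝ) :
    HasDerivAt (fun t : ℝ => Complex.sin (x * t)) (x * Complex.cos (x * u)) u := by
  have h := ((hasDerivAt_id (u : ℂ)).const_mul x).csin
  simpa [mul_comm] using h.comp_ofReal

lemma hasDerivAt_cos_mul_ofReal (x : ℂ) (u : ℝ) :
    HasDerivAt (fun t : ℝ => Complex.cos (x * t)) (-(x * Complex.sin (x * u))) u := by
  have h := ((hasDerivAt_id (u : ℂ)).const_mul x).ccos
  simpa [mul_comm] using h.comp_ofReal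

lemma mul_integral_one_sub_pow_succ_mul_cos (x : ℂ) (N : ℕ) :
    x * ∫ u in (0 : ℝ)..1, (1 - (u : ℂ)) ^ (N + 1) * Complex.cos (x * u) =
      (N + 1) * ∫ u in (0 : ℝ)..1, (1 - (u : ℂ)) ^ N * Complex.sin (x * u) := by
  have h := integral_mul_deriv_eq_deriv_mul (a := 0) (b := 1)
    (fun t _ => hasDerivAt_one_sub_ofReal_pow N t) (fun t _ => hasDerivAt_sin_mul_ofReal x t)
    (by apply Continuous.intervalIntegrable; fun_prop)
    (by apply Continuous.intervalIntegrable; fun_prop)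
  simp only [mul_left_comm _ x, integral_const_mul, neg_mul, integral_neg, mul_assoc] at h
  simpa using h

lemma mul_integral_one_sub_pow_succ_mul_sin (x : ℂ) (N : ℕ) :
    x * ∫ u in (0 : ℝ)..1, (1 - (u : ℂ)) ^ (N + 1) * Complex.sin (x * u) =
      1 - (N + 1) * ∫ u in (0 : ℝ)..1, (1 - (u : ℂ)) ^ N * Complex.cos (x * u) := by
  have h := integral_mul_deriv_eq_deriv_mul (a := 0) (b := 1)
    (fun t _ => hasDerivAt_one_sub_ofReal_pow N t) (fun t _ => hasDerivAt_cos_mul_ofReal x t)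
    (by apply Continuous.intervalIntegrable; fun_prop)
    (by apply Continuous.intervalIntegrable; fun_prop)
  simp only [mul_neg, mul_left_comm _ x, integral_const_mul, neg_mul, integral_neg, mul_assoc,
    ofReal_one, ofReal_zero, sub_self, sub_zero, one_pow, mul_one, mul_zero,
    zero_pow N.succ_ne_zero, zero_mul, Complex.cos_zero] at h
  linear_combination -h

lemma mul_integral_sin_mul (x : ℂ) :
    x * ∫ u in (0 : ℝ)..1, Complex.sin (x * u) = 1 - Complex.cos x := by
  have hderiv (t : ℝ) :
      HasDerivAt (fun t : ℝ => -Complex.cos (x * t)) (x * Complex.sin (x * t)) t := by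
    simpa using (hasDerivAt_cos_mul_ofReal x t).fun_neg
  rw [← integral_const_mul, integral_eq_sub_of_hasDerivAt (fun t _ => hderiv t)
    (by apply Continuous.intervalIntegrable; fun_prop)]
  simp only [ofReal_one, ofReal_zero, mul_one, mul_zero, Complex.cos_zero]
  ring

noncomputable def cosTaylorRemainder (k : ℕ) (x : ℂ) : ℂ :=
  Complex.cos x - ∑ j ∈ range k, (-1) ^ j * x ^ (2 * j) / (2 * j).factorial

lemma cosTaylorRemainder_succ (k : ℕ) (x : ℂ) :
    cosTaylorRemainder (k + 1) x =
      cosTaylorRemainder k x - (-1) ^ k * x ^ (2 * k) / (2 * k).factorial := by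
  rw [cosTaylorRemainder, cosTaylorRemainder, sum_range_succ, sub_add_eq_sub_sub]

lemma cosTaylorRemainder_eq_integral (x : ℂ) {k : ℕ} (hk : 0 < k) :
    cosTaylorRemainder k x = (-1) ^ k * x ^ (2 * k) / (2 * k - 1).factorial *
      ∫ u in (0 : ℝ)..1, (1 - (u : ℂ)) ^ (2 * k - 1) * Complex.cos (x * u) := by
  obtain ⟨k, rfl⟩ := Nat.exists_eq_add_one_of_ne_zero hk.ne'
  rw [show 2 * (k + 1) - 1 = 2 * k + 1 by omega]
  induction k with
  | zero =>
    have h := mul_integral_one_sub_pow_succ_mul_cos x 0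
    simp only [pow_zero, one_mul, zero_add, pow_one, Nat.cast_zero] at h
    simp only [cosTaylorRemainder, sum_range_one, mul_zero, mul_one, zero_add, pow_zero, pow_one,
      Nat.factorial, Nat.cast_one, div_one]
    linear_combination x * h + mul_integral_sin_mul x
  | succ k ih =>
    have hcos := mul_integral_one_sub_pow_succ_mul_cos x (2 * (k + 1))
    have hsin := mul_integral_one_sub_pow_succ_mul_sin x (2 * k + 1)
    rw [show 2 * k + 1 + 1 = 2 * (k + 1) by ring] at hsin
    have hF : ((2 * k + 1).factorial : ℂ) ≠ 0 := Nat.cast_ne_zero.mpr (Nat.factorial_ne_zero _)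
    have h2 : (2 * k + 2 : ℂ) ≠ 0 := by exact_mod_cast (by omega : 2 * k + 2 ≠ 0)
    have h3 : (2 * k + 3 : ℂ) ≠ 0 := by exact_mod_cast (by omega : 2 * k + 3 ≠ 0)
    have hF2 : ((2 * (k + 1)).factorial : ℂ) = (2 * k + 2) * (2 * k + 1).factorial := by
      push_cast [show 2 * (k + 1) = 2 * k + 1 + 1 by ring, Nat.factorial_succ]; ring
    have hF3 : ((2 * (k + 1) + 1).factorial : ℂ) =
        (2 * k + 3) * (2 * k + 2) * (2 * k + 1).factorial := by
      push_cast [Nat.factorial_succ, hF2]; ring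
    rw [cosTaylorRemainder_succ, ih (by omega), hF2, hF3]
    push_cast at hcos hsin
    -- hide the integrals from `field_simp`, which would otherwise rewrite inside them
    generalize (∫ u in (0 : ℝ)..1, (1 - (u : ℂ)) ^ (2 * k + 1) * Complex.cos (x * u)) = I₁
      at *
    generalize (∫ u in (0 : ℝ)..1, (1 - (u : ℂ)) ^ (2 * (k + 1)) * Complex.sin (x * u)) = S
      at *
    generalize
      (∫ u in (0 : ℝ)..1, (1 - (u : ℂ)) ^ (2 * (k + 1) + 1) * Complex.cos (x * u)) = I₃ at *
    linear_combination (norm := skip)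
      (-1) ^ (k + 1) * x ^ (2 * (k + 1)) * x /
          ((2 * k + 3) * (2 * k + 2) * (2 * k + 1).factorial) * hcos
      + (-1) ^ (k + 1) * x ^ (2 * (k + 1)) / ((2 * k + 2) * (2 * k + 1).factorial) * hsin
    field_simp
    ring

lemma one_div_pow_mul_cosTaylorRemainder (c z : ℂ) (hz : z ≠ 0) {k : ℕ} (hk : 0 < k) :
    1 / z ^ (2 * k) * cosTaylorRemainder k (c * z) =
      (-1) ^ k * c ^ (2 * k) / (2 * k - 1).factorial *
        ∫ u in (0 : ℝ)..1, (1 - (u : ℂ)) ^ (2 * k - 1) * Complex.cos (c * z * u) := by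
  rw [cosTaylorRemainder_eq_integral _ hk, mul_pow]
  generalize (∫ u in (0 : ℝ)..1, (1 - (u : ℂ)) ^ (2 * k - 1) * Complex.cos (c * z * u)) = I
  field_simp

lemma one_div_pow_mul_cosTaylorRemainder_succ (c z : ℂ) (hz : z ≠ 0) (k : ℕ) :
    1 / z ^ (2 * k) * cosTaylorRemainder (k + 1) (c * z) =
      1 / z ^ (2 * k) * cosTaylorRemainder k (c * z) -
        (-1) ^ k * c ^ (2 * k) / (2 * k).factorial := by
  rw [cosTaylorRemainder_succ, mul_pow]
  field_simp

lemma one_div_pow_mul_cos (c z : ℂ) (hz : z ≠ 0) (k : ℕ) :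
    1 / z ^ (2 * k) * Complex.cos (c * z) =
      1 / z ^ (2 * k) * cosTaylorRemainder k (c * z) +
        ∑ i ∈ Icc 1 k, (-1) ^ (k - i) * c ^ (2 * k - 2 * i) / (2 * k - 2 * i).factorial *
          (1 / z ^ (2 * i)) := by
  suffices h : ∑ i ∈ Icc 1 k, (-1) ^ (k - i) * c ^ (2 * k - 2 * i) / (2 * k - 2 * i).factorial *
      (1 / z ^ (2 * i)) =
      1 / z ^ (2 * k) * ∑ j ∈ range k, (-1) ^ j * (c * z) ^ (2 * j) / (2 * j).factorial by
    rw [h, cosTaylorRemainder]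
    ring
  rw [mul_sum]
  refine sum_nbij' (fun i => k - i) (fun j => k - j) ?_ ?_ ?_ ?_ ?_ <;>
    simp only [mem_Icc, mem_range]
  iterate 4 (intro i hi; omega)
  · intro i ⟨hi₁, hik⟩
    obtain ⟨j, rfl⟩ := Nat.exists_eq_add_of_le hik
    rw [show i + j - i = j by omega, show 2 * (i + j) - 2 * i = 2 * j by omega, mul_pow,
      show 2 * (i + j) = 2 * j + 2 * i by ring, pow_add]
    field_simp

lemma sum_range_succ_add_self {M : Type*} [AddCommGroup M] (f : ℕ → M) (n : ℕ) :
    ∑ j ∈ range n, (f (j + 1) + f j) = f 0 - f n + 2 • ∑ j ∈ Icc 1 n, f j := by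
  have hshift : ∑ j ∈ Icc 1 n, f j = ∑ j ∈ range n, f (j + 1) := by
    rw [← Ico_add_one_right_eq_Icc, sum_Ico_eq_sum_range]
    simp [add_comm]
  have h := (sum_range_succ f n).symm.trans (sum_range_succ' f n)
  rw [sum_add_distrib, hshift, two_smul, eq_sub_of_add_eq h]
  abel

lemma sum_one_div_pow_mul_cos_eq_sum_cosTaylorRemainder (c : ℂ) {z : ℕ → ℂ} {n : ℕ}
    (hz : ∀ j ∈ Icc 1 n, z j ≠ 0) (k : ℕ) :
    ∑ j ∈ Icc 1 n, 1 / z j ^ (2 * k) * Complex.cos (c * z j) =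
      ∑ j ∈ Icc 1 n, 1 / z j ^ (2 * k) * cosTaylorRemainder k (c * z j) +
        ∑ i ∈ Icc 1 k, (-1) ^ (k - i) * c ^ (2 * k - 2 * i) / (2 * k - 2 * i).factorial *
          ∑ j ∈ Icc 1 n, 1 / z j ^ (2 * i) := by
  simp_rw [mul_sum]
  rw [sum_comm (s := Icc 1 k), ← sum_add_distrib]
  exact sum_congr rfl fun j hj => one_div_pow_mul_cos c _ (hz j hj) k

lemma sum_one_div_pow_mul_cos_eq (c : ℂ) {z : ℕ → ℂ} {n : ℕ} (hz : ∀ j ≤ n, z j ≠ 0)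
    {k : ℕ} (hk : 0 < k) :
    ∑ j ∈ Icc 1 n, 1 / z j ^ (2 * k) * Complex.cos (c * z j) =
      -(1 / (2 * z 0 ^ (2 * k))) * cosTaylorRemainder (k + 1) (c * z 0) +
        1 / (2 * z n ^ (2 * k)) * cosTaylorRemainder (k + 1) (c * z n) +
        ∑ i ∈ Icc 1 k, (-1) ^ (k - i) * c ^ (2 * k - 2 * i) / (2 * k - 2 * i).factorial *
          ∑ j ∈ Icc 1 n, 1 / z j ^ (2 * i) +
        (-1) ^ k * c ^ (2 * k) / (2 * (2 * k - 1).factorial) *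
          ∑ j ∈ range n,
            ((∫ u in (0 : ℝ)..1,
                (1 - (u : ℂ)) ^ (2 * k - 1) * Complex.cos (c * z (j + 1) * u)) +
              ∫ u in (0 : ℝ)..1,
                (1 - (u : ℂ)) ^ (2 * k - 1) * Complex.cos (c * z j * u)) := by
  have htaylor := sum_range_succ_add_self
    (fun j => 1 / z j ^ (2 * k) * cosTaylorRemainder k (c * z j)) n
  rw [sum_congr rfl fun j hj => by
    rw [one_div_pow_mul_cosTaylorRemainder c _ (hz (j + 1) (mem_range.mp hj)) hk,
      one_div_pow_mul_cosTaylorRemainder c _ (hz j (mem_range.mp hj).le) hk, ← mul_add],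
    ← mul_sum, two_smul] at htaylor
  have hsplit := sum_one_div_pow_mul_cos_eq_sum_cosTaylorRemainder c
    (fun j hj => hz j (mem_Icc.mp hj).2) k
  have hend₀ := one_div_pow_mul_cosTaylorRemainder_succ c _ (hz 0 n.zero_le) k
  have hendₙ := one_div_pow_mul_cosTaylorRemainder_succ c _ (hz n le_rfl) k
  linear_combination hsplit - htaylor / 2 + hend₀ / 2 - hendₙ / 2

lemma sin_sub_sin_mul_cot_eq_sum_cos (Y : ℕ → ℂ) {θ : ℂ} (hθ : Complex.sin θ ≠ 0)
    (hY : ∀ j, Y (j + 1) = Y j + 2 * θ) (n : ℕ) :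
    (Complex.sin (Y n) - Complex.sin (Y 0)) * Complex.cot θ =
      ∑ j ∈ range n, (Complex.cos (Y (j + 1)) + Complex.cos (Y j)) := by
  rw [← sum_range_sub (fun j => Complex.sin (Y j)), sum_mul]
  refine sum_congr rfl fun j _ => ?_
  rw [hY, Complex.sin_sub_sin, Complex.cos_add_cos, Complex.cot_eq_cos_div_sin,
    show (Y j + 2 * θ - Y j) / 2 = θ by ring, show (Y j + 2 * θ + Y j) / 2 = Y j + θ by ring]
  field_simp

lemma ae_sin_mul_ofReal_ne_zero {w : ℂ} (hw : w ≠ 0) :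
    ∀ᵐ u : ℝ, Complex.sin (w * u) ≠ 0 := by
  have hzeros :
      {u : ℝ | Complex.sin (w * u) = 0} ⊆ Set.range fun ℓ : ℤ => (ℓ * π / w).re := by
    intro u hu
    obtain ⟨ℓ, hℓ⟩ := Complex.sin_eq_zero_iff.mp hu
    refine ⟨ℓ, ?_⟩
    simp only [← hℓ, mul_div_cancel_left₀ _ hw, Complex.ofReal_re]
  exact MeasureTheory.measure_eq_zero_iff_ae_notMem.mp
    (((Set.countable_range _).mono hzeros).measure_zero _)

lemma integral_mul_sin_sub_sin_mul_cot {f : ℝ → ℂ} (hf : Continuous f) (Y : ℕ → ℂ)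
    {θ : ℂ} (hθ : θ ≠ 0) (hY : ∀ j, Y (j + 1) = Y j + 2 * θ) (n : ℕ) (s t : ℝ) :
    ∫ u in s..t, f u * (Complex.sin (Y n * u) - Complex.sin (Y 0 * u)) * Complex.cot (θ * u) =
      ∑ j ∈ range n, ((∫ u in s..t, f u * Complex.cos (Y (j + 1) * u)) +
        ∫ u in s..t, f u * Complex.cos (Y j * u)) := by
  have hae : ∀ᵐ u : ℝ, u ∈ Set.uIoc s t →
      f u * (Complex.sin (Y n * u) - Complex.sin (Y 0 * u)) * Complex.cot (θ * u) =
        ∑ j ∈ range n, (f u * Complex.cos (Y (j + 1) * u) + f u * Complex.cos (Y j * u)) := by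
    filter_upwards [ae_sin_mul_ofReal_ne_zero hθ] with u hu _
    rw [mul_assoc, sin_sub_sin_mul_cot_eq_sum_cos (fun j => Y j * u) hu
      (fun j => by rw [hY]; ring), mul_sum]
    simp only [mul_add]
  rw [integral_congr_ae hae, integral_finsetSum fun j _ => by
    apply Continuous.intervalIntegrable; fun_prop]
  exact sum_congr rfl fun j _ => integral_add
    (by apply Continuous.intervalIntegrable; fun_prop)
    (by apply Continuous.intervalIntegrable; fun_prop)

theorem stmt_14_general (a b : ℤ) (ha : a ≠ 0) (hb : b ≠ 0) (n : ℕ)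
    (h : ∀ j : ℤ, 1 ≤ j → j ≤ n → a * j + b ≠ 0) (m : ℂ) (hm : m ≠ 0)
    (k : ℕ) (hk : 0 < k) :
    ∑ j ∈ Finset.Icc 1 n,
        (1 : ℂ) / (a * j + b) ^ (2 * k) * Complex.cos (2 * π * ((a : ℂ) * j + b) / m) =
      -(1 / (2 * (b : ℂ) ^ (2 * k))) *
          (Complex.cos (2 * π * (b : ℂ) / m) -
            ∑ j ∈ Finset.range (k + 1),
              (-1 : ℂ) ^ j * (2 * π * (b : ℂ) / m) ^ (2 * j) / (Nat.factorial (2 * j)))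
      + (1 / (2 * ((a : ℂ) * n + b) ^ (2 * k))) *
          (Complex.cos (2 * π * ((a : ℂ) * n + b) / m) -
            ∑ j ∈ Finset.range (k + 1),
              (-1 : ℂ) ^ j * (2 * π * ((a : ℂ) * n + b) / m) ^ (2 * j) /
                (Nat.factorial (2 * j)))
      + (∑ j ∈ Finset.Icc 1 k,
          ((-1 : ℂ) ^ (k - j) * (2 * π / m) ^ (2 * k - 2 * j) /
              (Nat.factorial (2 * k - 2 * j))) *
            ∑ i ∈ Finset.Icc 1 n, (1 : ℂ) / (a * i + b) ^ (2 * j))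
      + ((-1 : ℂ) ^ k * (2 * π / m) ^ (2 * k) / (2 * (Nat.factorial (2 * k - 1)))) *
          ∫ u in (0:ℝ)..1,
            (1 - (u : ℂ)) ^ (2 * k - 1) *
              (Complex.sin (2 * π * ((a : ℂ) * n + b) * u / m)
                - Complex.sin (2 * π * (b : ℂ) * u / m)) *
              Complex.cot (π * (a : ℂ) * u / m) := by
  generalize hc : 2 * (π : ℂ) / m = c
  have harg (z : ℂ) : 2 * π * z / m = c * z := by rw [← hc]; ring
  have harg' (z u : ℂ) : 2 * π * z * u / m = c * z * u := by rw [← hc]; ring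
  have hcot (u : ℂ) : π * a * u / m = π * a / m * u := by ring
  simp only [harg', harg, hcot]
  have hz (j : ℕ) (hj : j ≤ n) : (a * j + b : ℂ) ≠ 0 := by
    rcases j.eq_zero_or_pos with rfl | hj₀
    · simpa using hb
    · exact_mod_cast h j (by exact_mod_cast hj₀) (by exact_mod_cast hj)
  have hθ : (π * a / m : ℂ) ≠ 0 :=
    div_ne_zero (mul_ne_zero (ofReal_ne_zero.mpr pi_ne_zero) (Int.cast_ne_zero.mpr ha)) hm
  have hint := integral_mul_sin_sub_sin_mul_cot (f := fun u => (1 - (u : ℂ)) ^ (2 * k - 1))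
    (by fun_prop) (fun j : ℕ => c * (a * j + b)) hθ
    (fun j => by push_cast; rw [← hc]; ring) n 0 1
  have hsum := sum_one_div_pow_mul_cos_eq c (z := fun j : ℕ => (a * j + b : ℂ)) hz hk
  simp only [Nat.cast_zero, mul_zero, zero_add] at hint hsum
  rw [hint, ← cosTaylorRemainder.eq_1, ← cosTaylorRemainder.eq_1, hsum]

theorem stmt_14 (a b : ℤ) (ha : a ≠ 0) (hb : b ≠ 0) (n : ℕ) (hn : 0 < n)
    (h : ∀ j : ℤ, 1 ≤ j → j ≤ n → a * j + b ≠ 0) (m : ℂ) (hm : m ≠ 0)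
    (k : ℕ) (hk : 0 < k) :
    ∑ j ∈ Finset.Icc 1 n,
        (1 : ℂ) / (a * j + b) ^ (2 * k) * Complex.cos (2 * π * ((a : ℂ) * j + b) / m) =
      -(1 / (2 * (b : ℂ) ^ (2 * k))) *
          (Complex.cos (2 * π * (b : ℂ) / m) -
            ∑ j ∈ Finset.range (k + 1),
              (-1 : ℂ) ^ j * (2 * π * (b : ℂ) / m) ^ (2 * j) / (Nat.factorial (2 * j)))
      + (1 / (2 * ((a : ℂ) * n + b) ^ (2 * k))) *
          (Complex.cos (2 * π * ((a : ℂ) * n + b) / m) -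
            ∑ j ∈ Finset.range (k + 1),
              (-1 : ℂ) ^ j * (2 * π * ((a : ℂ) * n + b) / m) ^ (2 * j) /
                (Nat.factorial (2 * j)))
      + (∑ j ∈ Finset.Icc 1 k,
          ((-1 : ℂ) ^ (k - j) * (2 * π / m) ^ (2 * k - 2 * j) /
              (Nat.factorial (2 * k - 2 * j))) *
            ∑ i ∈ Finset.Icc 1 n, (1 : ℂ) / (a * i + b) ^ (2 * j))
      + ((-1 : ℂ) ^ k * (2 * π / m) ^ (2 * k) / (2 * (Nat.factorial (2 * k - 1)))) *
          ∫ u in (0:ℝ)..1,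
            (1 - (u : ℂ)) ^ (2 * k - 1) *
              (Complex.sin (2 * π * ((a : ℂ) * n + b) * u / m)
                - Complex.sin (2 * π * (b : ℂ) * u / m)) *
              Complex.cot (π * (a : ℂ) * u / m) :=
  stmt_14_general a b ha hb n h m hm k hk
end

section
/- Let a and b be nonzero integers, n a positive integer such that aj + b ≠ 0 for every integer j with 1 ≤ j ≤ n, m a nonzero complex number, and k a nonnegative integer. Writing HP_{r}(n) = ∑_{j=1}^{n} 1/(aj+b)^{r}, one has ∑_{j=1}^{n} (1/(aj+b)^{2k+1})·sin(2π(aj+b)/m) = -(1/(2b^{2k+1}))( sin(2πb/m) - ∑_{j=0}^{k} (-1)^{j}(2πb/m)^{2j+1}/(2j+1)! ) + (1/(2(an+b)^{2k+1}))( sin(2π(an+b)/m) - ∑_{j=0}^{k} (-1)^{j}(2π(an+b)/m)^{2j+1}/(2j+1)! ) + ∑_{j=1}^{k} ((-1)^{k-j}(2π/m)^{2k+1-2j}/(2k+1-2j)!)·HP_{2j}(n) + ((-1)^{k}(2π/m)^{2k+1}/(2(2k)!)) ∫_{0}^{1} (1-u)^{2k}·( sin(2π(an+b)u/m) - sin(2πbu/m)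 )·cot(πau/m) du. -/
/-
Expanding `sin` at `0` to order `2k+1` with integral remainder writes `sin (p d) / d^(2k+1)`
(`p = 2π/m`) as a combination of `d^(-2i)`, `1 ≤ i ≤ k`, which produces the `HP_{2i}(n)`
terms, plus `(-1)^k p^(2k+1) / (2k)! · ∫₀¹ (1-u)^(2k) cos (p d u) du`.
Summing over `d = aj + b`, the cosine integrals are collected by the telescoping identity
`(sin (y + 2h) - sin y) cot h = cos (y + 2h) + cos y` with `h = π a u / m`, which off the
null set where `sin h = 0` turns them into the cotangent integral; the endpoints `j = 0` and
`j = n` are paid for by the two boundary terms.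
-/

open Real Complex Finset intervalIntegral
open scoped Nat

theorem pow_succ_mul_integral_one_sub_pow_mul_cexp (w : ℂ) (r : ℕ) :
    w ^ (r + 1) * ∫ u in (0:ℝ)..1, (1 - (u:ℂ)) ^ r * cexp (w * u) =
      r ! * (cexp w - ∑ s ∈ range (r + 1), w ^ s / s !) := by
  rcases eq_or_ne w 0 with rfl | hw
  · simp [sum_range_succ']
  induction r with
  | zero =>
    simp [integral_exp_mul_complex hw]
    field_simp
  | succ r ih =>
    have hu : ∀ x ∈ Set.uIcc (0:ℝ) 1, HasDerivAt (fun x : ℝ => (1 - (x:ℂ)) ^ (r + 1))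
        (-((r + 1) * (1 - (x:ℂ)) ^ r)) x := fun x _ => by
      simpa using (((hasDerivAt_id (x:ℂ)).const_sub 1).pow (r + 1)).comp_ofReal
    have hv : ∀ x ∈ Set.uIcc (0:ℝ) 1, HasDerivAt (fun x : ℝ => cexp (w * x) / w)
        (cexp (w * x)) x := fun x _ => by
      have := ((((hasDerivAt_id (x:ℂ)).const_mul w).cexp).div_const w).comp_ofReal
      simpa [mul_div_cancel_right₀ _ hw] using this
    have hparts := integral_mul_deriv_eq_deriv_mul hu hv
      (Continuous.intervalIntegrable (by fun_prop) 0 1)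
      (Continuous.intervalIntegrable (by fun_prop) 0 1)
    have hrec : ∫ x in (0:ℝ)..1, -((r + 1) * (1 - (x:ℂ)) ^ r) * (cexp (w * x) / w)
        = -((r + 1) / w) * ∫ x in (0:ℝ)..1, (1 - (x:ℂ)) ^ r * cexp (w * x) := by
      rw [← integral_const_mul]
      congr 1; ext x; ring
    have hfac : ((r ! : ℕ) : ℂ) ≠ 0 := by exact_mod_cast r.factorial_ne_zero
    rw [hparts, hrec, sum_range_succ _ (r + 1), Nat.factorial_succ]
    push_cast
    simp only [sub_self, mul_zero, zero_pow (Nat.succ_ne_zero _), Complex.exp_zero, mul_one]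
    field_simp
    linear_combination (r + 1 : ℂ) * w * ih

theorem sum_range_pow_div_factorial_sub_neg (w : ℂ) (k : ℕ) :
    (∑ s ∈ range (2 * k + 1), w ^ s / s !) - ∑ s ∈ range (2 * k + 1), (-w) ^ s / s ! =
      2 * ∑ j ∈ range k, w ^ (2 * j + 1) / (2 * j + 1)! := by
  induction k with
  | zero => simp
  | succ k ih =>
    rw [show 2 * (k + 1) + 1 = 2 * k + 1 + 1 + 1 by ring]
    simp only [sum_range_succ _ (2 * k + 1 + 1), sum_range_succ _ (2 * k + 1), sum_range_succ _ k]
    have heven : Even (2 * k + 1 + 1) := ⟨k + 1, by ring⟩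
    rw [Odd.neg_pow ⟨k, rfl⟩, heven.neg_pow]
    linear_combination ih

noncomputable def sinTaylorRemainder (k : ℕ) (z : ℂ) : ℂ :=
  sin z - ∑ j ∈ range k, (-1) ^ j * z ^ (2 * j + 1) / (2 * j + 1)!

theorem sinTaylorRemainder_succ (k : ℕ) (z : ℂ) :
    sinTaylorRemainder (k + 1) z =
      sinTaylorRemainder k z - (-1) ^ k * z ^ (2 * k + 1) / (2 * k + 1)! := by
  simp only [sinTaylorRemainder, sum_range_succ]
  ring

noncomputable def oneSubPowCosIntegral (k : ℕ) (c : ℂ) : ℂ :=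
  ∫ u in (0:ℝ)..1, (1 - (u:ℂ)) ^ (2 * k) * cos (c * u)

theorem oneSubPowCosIntegral_zero (k : ℕ) : oneSubPowCosIntegral k 0 = 1 / (2 * k + 1) := by
  have hreflect := integral_comp_sub_left (fun x : ℝ => (x:ℂ) ^ (2 * k)) (a := 0) (b := 1) 1
  simp only [sub_zero, sub_self, ofReal_sub, ofReal_one] at hreflect
  simp only [oneSubPowCosIntegral, zero_mul, Complex.cos_zero, mul_one, hreflect]
  simp_rw [← ofReal_pow, intervalIntegral.integral_ofReal, integral_pow]
  norm_num

-- Taylor's formula for `sin` with integral remainder, from the one for `exp` at `± I * c`.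
theorem pow_mul_oneSubPowCosIntegral (c : ℂ) (k : ℕ) :
    c ^ (2 * k + 1) * oneSubPowCosIntegral k c =
      (-1) ^ k * (2 * k)! * sinTaylorRemainder k c := by
  have hI_pow : ∀ j : ℕ, (I * c) ^ (2 * j + 1) = I * ((-1) ^ j * c ^ (2 * j + 1)) := fun j => by
    rw [mul_pow, pow_succ, pow_mul, I_sq]; ring
  have hcos : oneSubPowCosIntegral k c =
      ((∫ u in (0:ℝ)..1, (1 - (u:ℂ)) ^ (2 * k) * cexp (I * c * u)) +
        ∫ u in (0:ℝ)..1, (1 - (u:ℂ)) ^ (2 * k) * cexp (-(I * c) * u)) / 2 := by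
    rw [oneSubPowCosIntegral, ← integral_add (Continuous.intervalIntegrable (by fun_prop) 0 1)
      (Continuous.intervalIntegrable (by fun_prop) 0 1), ← integral_div]
    congr 1; ext u
    rw [Complex.cos, show c * u * I = I * c * u by ring, show -(c * u) * I = -(I * c) * u by ring]
    ring
  have hplus := pow_succ_mul_integral_one_sub_pow_mul_cexp (I * c) (2 * k)
  have hminus := pow_succ_mul_integral_one_sub_pow_mul_cexp (-(I * c)) (2 * k)
  rw [Odd.neg_pow ⟨k, rfl⟩, hI_pow] at hminus
  rw [hI_pow] at hplus
  have hodd := sum_range_pow_div_factorial_sub_neg (I * c) k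
  simp only [hI_pow, mul_div_assoc I, ← mul_sum] at hodd
  have hsin : cexp (I * c) - cexp (-(I * c)) = 2 * I * sin c := by
    rw [Complex.sin, show -c * I = -(I * c) by ring, show c * I = I * c by ring]
    linear_combination (cexp (I * c) - cexp (-(I * c))) * I_sq
  have hmain : I * (-1) ^ k * (c ^ (2 * k + 1) * oneSubPowCosIntegral k c)
      = I * (2 * k)! * sinTaylorRemainder k c := by
    rw [hcos, sinTaylorRemainder]
    linear_combination (hplus - hminus) / 2 + (2 * k)! / 2 * hsin - (2 * k)! / 2 * hodd
  have hsq : ((-1 : ℂ) ^ k) ^ 2 = 1 := by rw [← pow_mul, mul_comm, pow_mul]; simp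
  refine mul_left_cancel₀ (mul_ne_zero I_ne_zero (pow_ne_zero k (neg_ne_zero.2 one_ne_zero))) ?_
  linear_combination hmain - I * (2 * k)! * sinTaylorRemainder k c * hsq

theorem sinTaylorRemainder_mul_div_pow {d : ℂ} (hd : d ≠ 0) (p : ℂ) (k : ℕ) :
    sinTaylorRemainder k (p * d) / d ^ (2 * k + 1) =
      (-1) ^ k * p ^ (2 * k + 1) / (2 * k)! * oneSubPowCosIntegral k (p * d) := by
  have h := pow_mul_oneSubPowCosIntegral (p * d) k
  have hsq : ((-1 : ℂ) ^ k) ^ 2 = 1 := by rw [← pow_mul, mul_comm, pow_mul]; simp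
  have hfac : ((2 * k)! : ℂ) ≠ 0 := by exact_mod_cast (2 * k).factorial_ne_zero
  rw [mul_pow] at h
  field_simp
  linear_combination -(-1) ^ k * h - sinTaylorRemainder k (p * d) * (2 * k)! * hsq

theorem sinTaylorRemainder_succ_mul_div_pow (p d : ℂ) (k : ℕ) :
    sinTaylorRemainder (k + 1) (p * d) / d ^ (2 * k + 1) =
      (-1) ^ k * p ^ (2 * k + 1) / (2 * k)! * oneSubPowCosIntegral k (p * d) -
        (-1) ^ k * p ^ (2 * k + 1) / (2 * k + 1)! := by
  have hfac : ((2 * k + 1)! : ℂ) = (2 * k + 1) * (2 * k)! := by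
    push_cast [Nat.factorial_succ]; ring
  have hfac0 : ((2 * k)! : ℂ) ≠ 0 := by exact_mod_cast (2 * k).factorial_ne_zero
  -- at `d = 0` both sides vanish, the left one because `x / 0 = 0`
  rcases eq_or_ne d 0 with rfl | hd
  · rw [mul_zero, oneSubPowCosIntegral_zero, hfac]
    field_simp
    simp
  · rw [sinTaylorRemainder_succ, sub_div, sinTaylorRemainder_mul_div_pow hd, mul_pow]
    congr 1
    field_simp

theorem sum_Icc_one_eq_sum_range_sub {M : Type*} [AddCommMonoid M] (f : ℕ → M) (k : ℕ) :
    ∑ i ∈ Icc 1 k, f i = ∑ j ∈ range k, f (k - j) := by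
  refine sum_nbij' (k - ·) (k - ·) ?_ ?_ ?_ ?_ ?_ <;> intro a ha <;>
    simp only [mem_Icc, mem_range] at ha ⊢ <;> first | omega | rw [Nat.sub_sub_self ha.2]

theorem one_div_pow_mul_sin {d : ℂ} (hd : d ≠ 0) (p : ℂ) (k : ℕ) :
    1 / d ^ (2 * k + 1) * sin (p * d) =
      (-1) ^ k * p ^ (2 * k + 1) / (2 * k)! * oneSubPowCosIntegral k (p * d) +
        ∑ i ∈ Icc 1 k, (-1) ^ (k - i) * p ^ (2 * k + 1 - 2 * i) / (2 * k + 1 - 2 * i)! *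
          (1 / d ^ (2 * i)) := by
  rw [← sinTaylorRemainder_mul_div_pow hd, sum_Icc_one_eq_sum_range_sub, sinTaylorRemainder]
  have hterm : ∀ j ∈ range k,
      (-1) ^ j * (p * d) ^ (2 * j + 1) / (2 * j + 1)! / d ^ (2 * k + 1) =
      (-1) ^ (k - (k - j)) * p ^ (2 * k + 1 - 2 * (k - j)) / (2 * k + 1 - 2 * (k - j))! *
        (1 / d ^ (2 * (k - j))) := fun j hj => by
    have hjk : j < k := mem_range.1 hj
    rw [show k - (k - j) = j by omega, show 2 * k + 1 - 2 * (k - j) = 2 * j + 1 by omega,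
      show 2 * k + 1 = 2 * j + 1 + 2 * (k - j) by omega, pow_add d, mul_pow]
    field_simp
  rw [← sum_congr rfl hterm, ← sum_div]
  ring

theorem sin_add_two_mul_sub_sin_mul_cot (y h : ℂ) (hh : sin h ≠ 0) :
    (sin (y + 2 * h) - sin y) * cot h = cos (y + 2 * h) + cos y := by
  rw [Complex.cot_eq_cos_div_sin, mul_div_assoc', div_eq_iff hh]
  simp only [Complex.sin_add, Complex.cos_add, Complex.sin_two_mul, Complex.cos_two_mul]
  linear_combination 2 * Complex.cos h * Complex.sin y * Complex.sin_sq_add_cos_sq h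

theorem sin_sub_sin_mul_cot_eq_sum (f : ℕ → ℂ) (h : ℂ) (hf : ∀ j, f (j + 1) = f j + 2 * h)
    (hh : sin h ≠ 0) (n : ℕ) :
    (sin (f n) - sin (f 0)) * cot h = ∑ j ∈ range n, (cos (f (j + 1)) + cos (f j)) := by
  rw [← sum_range_sub (fun j => sin (f j)), sum_mul]
  refine sum_congr rfl fun j _ => ?_
  rw [hf]
  exact sin_add_two_mul_sub_sin_mul_cot (f j) h hh

theorem ae_sin_mul_ofReal_ne_zero_s15 {c : ℂ} (hc : c ≠ 0) : ∀ᵐ u : ℝ, sin (c * u) ≠ 0 := by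
  have hinj : Function.Injective fun u : ℝ => c * u := fun u v huv => by
    simpa using mul_left_cancel₀ hc huv
  have hzeros : {u : ℝ | sin (c * u) = 0}.Countable := by
    refine ((Set.countable_range fun ℓ : ℤ => (ℓ : ℂ) * π).preimage hinj).mono
      fun u hu => ?_
    obtain ⟨ℓ, hℓ⟩ := sin_eq_zero_iff.1 hu
    exact ⟨ℓ, hℓ.symm⟩
  exact MeasureTheory.measure_eq_zero_iff_ae_notMem.1 (hzeros.measure_zero _)

theorem integral_one_sub_pow_mul_sin_sub_sin_mul_cot (f : ℕ → ℂ) {h : ℂ}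
    (hf : ∀ j, f (j + 1) = f j + 2 * h) (hh : h ≠ 0) (k n : ℕ) :
    ∫ u in (0:ℝ)..1, (1 - (u:ℂ)) ^ (2 * k) * (sin (f n * u) - sin (f 0 * u)) * cot (h * u) =
      ∑ j ∈ range n, (oneSubPowCosIntegral k (f (j + 1)) + oneSubPowCosIntegral k (f j)) := by
  have hpointwise : ∀ᵐ u : ℝ, u ∈ Set.uIoc (0:ℝ) 1 →
      (1 - (u:ℂ)) ^ (2 * k) * (sin (f n * u) - sin (f 0 * u)) * cot (h * u) =
        ∑ j ∈ range n, ((1 - (u:ℂ)) ^ (2 * k) * cos (f (j + 1) * u) +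
          (1 - (u:ℂ)) ^ (2 * k) * cos (f j * u)) := by
    filter_upwards [ae_sin_mul_ofReal_ne_zero_s15 hh] with u hu _
    rw [mul_assoc, sin_sub_sin_mul_cot_eq_sum (f · * u) (h * u)
      (fun j => by rw [hf]; ring) hu n, mul_sum]
    simp only [mul_add]
  rw [integral_congr_ae hpointwise, integral_finsetSum fun j _ =>
    Continuous.intervalIntegrable (by fun_prop) 0 1]
  refine sum_congr rfl fun j _ => ?_
  exact integral_add (Continuous.intervalIntegrable (by fun_prop) 0 1)
    (Continuous.intervalIntegrable (by fun_prop) 0 1)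

theorem sum_range_add_succ {R : Type*} [CommRing R] (f : ℕ → R) (n : ℕ) :
    ∑ j ∈ range n, (f (j + 1) + f j) = 2 * ∑ j ∈ Icc 1 n, f j - f n + f 0 := by
  induction n with
  | zero => simp
  | succ n ih =>
    rw [sum_range_succ, ih, sum_Icc_succ_top (by omega)]
    ring

theorem stmt_15_general (a b : ℤ) (ha : a ≠ 0) (n : ℕ)
    (h : ∀ j : ℤ, 1 ≤ j → j ≤ n → a * j + b ≠ 0) (m : ℂ) (hm : m ≠ 0) (k : ℕ) :
    ∑ j ∈ Finset.Icc 1 n,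
        (1 : ℂ) / (a * j + b) ^ (2 * k + 1) *
          Complex.sin (2 * π * ((a : ℂ) * j + b) / m) =
      -(1 / (2 * (b : ℂ) ^ (2 * k + 1))) *
          (Complex.sin (2 * π * (b : ℂ) / m) -
            ∑ j ∈ Finset.range (k + 1),
              (-1 : ℂ) ^ j * (2 * π * (b : ℂ) / m) ^ (2 * j + 1) /
                (Nat.factorial (2 * j + 1)))
      + (1 / (2 * ((a : ℂ) * n + b) ^ (2 * k + 1))) *
          (Complex.sin (2 * π * ((a : ℂ) * n + b) / m) -
            ∑ j ∈ Finset.range (k + 1),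
              (-1 : ℂ) ^ j * (2 * π * ((a : ℂ) * n + b) / m) ^ (2 * j + 1) /
                (Nat.factorial (2 * j + 1)))
      + (∑ j ∈ Finset.Icc 1 k,
          ((-1 : ℂ) ^ (k - j) * (2 * π / m) ^ (2 * k + 1 - 2 * j) /
              (Nat.factorial (2 * k + 1 - 2 * j))) *
            ∑ i ∈ Finset.Icc 1 n, (1 : ℂ) / (a * i + b) ^ (2 * j))
      + ((-1 : ℂ) ^ k * (2 * π / m) ^ (2 * k + 1) / (2 * (Nat.factorial (2 * k)))) *
          ∫ u in (0:ℝ)..1,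
            (1 - (u : ℂ)) ^ (2 * k) *
              (Complex.sin (2 * π * ((a : ℂ) * n + b) * u / m)
                - Complex.sin (2 * π * (b : ℂ) * u / m)) *
              Complex.cot (π * (a : ℂ) * u / m) := by
  have hfreq : ∀ d : ℂ, 2 * π * d / m = 2 * π / m * d := fun d => by ring
  have hfreq_mul : ∀ d u : ℂ, 2 * π * d * u / m = 2 * π / m * d * u := fun d u => by ring
  have hcot : ∀ u : ℂ, π * a * u / m = π * a / m * u := fun u => by ring
  simp only [hfreq, hfreq_mul, hcot]
  set p : ℂ := 2 * π / m
  have hterm : ∀ j ∈ Icc 1 n, (1 : ℂ) / (a * j + b) ^ (2 * k + 1) * sin (p * (a * j + b)) =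
      (-1) ^ k * p ^ (2 * k + 1) / (2 * k)! * oneSubPowCosIntegral k (p * (a * j + b)) +
        ∑ i ∈ Icc 1 k, (-1) ^ (k - i) * p ^ (2 * k + 1 - 2 * i) / (2 * k + 1 - 2 * i)! *
          (1 / (a * j + b) ^ (2 * i)) := fun j hj => by
    obtain ⟨hj1, hjn⟩ := mem_Icc.1 hj
    have hd : (a : ℂ) * j + b ≠ 0 := by
      exact_mod_cast h j (by exact_mod_cast hj1) (by exact_mod_cast hjn)
    exact one_div_pow_mul_sin hd p k
  have hboundary : ∀ d : ℂ, 1 / (2 * d ^ (2 * k + 1)) * (sin (p * d) -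
      ∑ j ∈ range (k + 1), (-1) ^ j * (p * d) ^ (2 * j + 1) / (2 * j + 1)!) =
      ((-1) ^ k * p ^ (2 * k + 1) / (2 * k)! * oneSubPowCosIntegral k (p * d) -
        (-1) ^ k * p ^ (2 * k + 1) / (2 * k + 1)!) / 2 := fun d => by
    rw [← sinTaylorRemainder_succ_mul_div_pow, sinTaylorRemainder]
    ring
  have hπa : π * (a : ℂ) / m ≠ 0 :=
    div_ne_zero (mul_ne_zero (ofReal_ne_zero.2 pi_ne_zero) (Int.cast_ne_zero.2 ha)) hm
  have hint := integral_one_sub_pow_mul_sin_sub_sin_mul_cot (fun j : ℕ => p * (a * j + b))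
    (fun j => by push_cast; ring) hπa k n
  simp only [Nat.cast_zero, mul_zero, zero_add] at hint
  rw [hint, sum_range_add_succ (fun j : ℕ => oneSubPowCosIntegral k (p * (a * j + b))),
    sum_congr rfl hterm, sum_add_distrib, sum_comm, neg_mul, hboundary, hboundary]
  simp only [← mul_sum, Nat.cast_zero, mul_zero, zero_add]
  ring

theorem stmt_15 (a b : ℤ) (ha : a ≠ 0) (hb : b ≠ 0) (n : ℕ) (hn : 0 < n)
    (h : ∀ j : ℤ, 1 ≤ j → j ≤ n → a * j + b ≠ 0) (m : ℂ) (hm : m ≠ 0) (k : ℕ) :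
    ∑ j ∈ Finset.Icc 1 n,
        (1 : ℂ) / (a * j + b) ^ (2 * k + 1) *
          Complex.sin (2 * π * ((a : ℂ) * j + b) / m) =
      -(1 / (2 * (b : ℂ) ^ (2 * k + 1))) *
          (Complex.sin (2 * π * (b : ℂ) / m) -
            ∑ j ∈ Finset.range (k + 1),
              (-1 : ℂ) ^ j * (2 * π * (b : ℂ) / m) ^ (2 * j + 1) /
                (Nat.factorial (2 * j + 1)))
      + (1 / (2 * ((a : ℂ) * n + b) ^ (2 * k + 1))) *
          (Complex.sin (2 * π * ((a : ℂ) * n + b) / m) -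
            ∑ j ∈ Finset.range (k + 1),
              (-1 : ℂ) ^ j * (2 * π * ((a : ℂ) * n + b) / m) ^ (2 * j + 1) /
                (Nat.factorial (2 * j + 1)))
      + (∑ j ∈ Finset.Icc 1 k,
          ((-1 : ℂ) ^ (k - j) * (2 * π / m) ^ (2 * k + 1 - 2 * j) /
              (Nat.factorial (2 * k + 1 - 2 * j))) *
            ∑ i ∈ Finset.Icc 1 n, (1 : ℂ) / (a * i + b) ^ (2 * j))
      + ((-1 : ℂ) ^ k * (2 * π / m) ^ (2 * k + 1) / (2 * (Nat.factorial (2 * k)))) *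
          ∫ u in (0:ℝ)..1,
            (1 - (u : ℂ)) ^ (2 * k) *
              (Complex.sin (2 * π * ((a : ℂ) * n + b) * u / m)
                - Complex.sin (2 * π * (b : ℂ) * u / m)) *
              Complex.cot (π * (a : ℂ) * u / m) :=
  stmt_15_general a b ha n h m hm k
end
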